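/- arXiv:2504.04496 — 5 statements merged into one kernel-verified Lean document; each statement's English description precedes it below -/
import Mathlib

section
/- If a graph G is perfectly divisible, then its chromatic number satisfies χ(G) ≤ ω(G)(ω(G)+1)/2, where ω(G) is the clique number. -/
open SimpleGraph

/-- The clique number ω(G). -/
noncomputable def cliqueNumber {V : Type*} (G : SimpleGraph V) : ℕ :=
  sSup {n | ∃ s : Finset V, G.IsNClique n s}

/-- A graph is perfect if every induced subgraph has chromatic number equal to clique number. -/
def IsPerfectGraph {V : Type*} (G : SimpleGraph V) : Prop :=
  ∀ S : Set V, (G.induce S).chromaticNumber = (cliqueNumber (G.induce S) : ℕ∞)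

/-- A graph is perfectly divisible if each (nonempty) induced subgraph H has a partition of its
vertices into A and B with H[A] perfect and ω(H[B]) < ω(H). -/
def PerfectlyDivisible {V : Type*} (G : SimpleGraph V) : Prop :=
  ∀ S : Set V, S.Nonempty →
    ∃ A B : Set V, A ∪ B = S ∧ A ∩ B = ∅ ∧
      IsPerfectGraph (G.induce A) ∧
      cliqueNumber (G.induce B) < cliqueNumber (G.induce S)

/-- A vertex is trisimplicial if its neighborhood is the union of three cliques. -/
def Trisimplicial {V : Type*} (G : SimpleGraph V) (u : V) : Prop :=
  ∃ C₁ C₂ C₃ : Set V, G.IsClique C₁ ∧ G.IsClique C₂ ∧ G.IsClique C₃ ∧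
    G.neighborSet u = C₁ ∪ C₂ ∪ C₃

/-- The claw K₁,₃ : vertex 0 is the center, adjacent to 1, 2, 3. -/
def claw : SimpleGraph (Fin 4) :=
  SimpleGraph.fromRel (fun a _ => a = 0)

/-- The fork (chair): claw with one edge subdivided once.
Vertex 2 is the center, adjacent to 0, 1, 3; and 3 is adjacent to 4. -/
def fork : SimpleGraph (Fin 5) :=
  SimpleGraph.fromRel (fun a b => (a = 2 ∧ (b = 0 ∨ b = 1 ∨ b = 3)) ∨ (a = 3 ∧ b = 4))

/-- The odd parachute on hole length n: hole vertices `Sum.inl i` (i : ZMod n),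
`Sum.inr 0` is complete to the hole, `Sum.inr 1` is adjacent only to `Sum.inr 0`. -/
def oddParachute (n : ℕ) : SimpleGraph (ZMod n ⊕ Fin 2) :=
  SimpleGraph.fromRel (fun a b =>
    (∃ i : ZMod n, a = Sum.inl i ∧ b = Sum.inl (i + 1)) ∨
    (∃ i : ZMod n, a = Sum.inl i ∧ b = Sum.inr 0) ∨
    (a = Sum.inr 0 ∧ b = Sum.inr 1))

/-- The odd balloon on hole length n: hole vertices `Sum.inl i`, the center `Sum.inr 0`
adjacent to the consecutive hole vertices `Sum.inl 0`, `Sum.inl 1` and to the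
pendant vertex `Sum.inr 1`. -/
def oddBalloon (n : ℕ) : SimpleGraph (ZMod n ⊕ Fin 2) :=
  SimpleGraph.fromRel (fun a b =>
    (∃ i : ZMod n, a = Sum.inl i ∧ b = Sum.inl (i + 1)) ∨
    (a = Sum.inr 0 ∧ (b = Sum.inl 0 ∨ b = Sum.inl 1 ∨ b = Sum.inr 1)))

/-- G has no induced fork. -/
def ForkFree {V : Type*} (G : SimpleGraph V) : Prop := IsEmpty (fork ↪g G)

/-- G has no induced claw. -/
def ClawFree {V : Type*} (G : SimpleGraph V) : Prop := IsEmpty (claw ↪g G)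

/-- G has no induced odd parachute. -/
def OddParachuteFree {V : Type*} (G : SimpleGraph V) : Prop :=
  ∀ n : ℕ, 5 ≤ n → Odd n → IsEmpty (oddParachute n ↪g G)

/-- `v : ZMod n → V` enumerates an induced cycle of `G`:
`v` is injective and `v i ~ v j` iff `i, j` are consecutive mod `n`. -/
def IsInducedCycle {V : Type*} (G : SimpleGraph V) {n : ℕ} (v : ZMod n → V) : Prop :=
  Function.Injective v ∧ ∀ i j : ZMod n, G.Adj (v i) (v j) ↔ (j = i + 1 ∨ i = j + 1)



lemma cliqueSet_nonempty {V : Type*} (G : SimpleGraph V) :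
    {n | ∃ s : Finset V, G.IsNClique n s}.Nonempty :=
  ⟨0, ∅, by simp⟩

lemma cliqueSet_bddAbove {V : Type*} [Finite V] (G : SimpleGraph V) :
    BddAbove {n | ∃ s : Finset V, G.IsNClique n s} := by
  haveI := Fintype.ofFinite V
  refine ⟨Fintype.card V, fun n hn => ?_⟩
  obtain ⟨s, hs⟩ := hn
  rw [← hs.card_eq]
  exact Finset.card_le_univ s

lemma cliqueNumber_le_of_embedding {V W : Type*} [Finite W] {G : SimpleGraph V}
    {G' : SimpleGraph W} (f : G ↪g G') : cliqueNumber G ≤ cliqueNumber G' := by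
  refine csSup_le (cliqueSet_nonempty G) fun n hn => ?_
  obtain ⟨s, hs⟩ := hn
  refine le_csSup (cliqueSet_bddAbove G') ⟨s.map f.toEmbedding, ?_, by simp [hs.card_eq]⟩
  intro a ha b hb hab
  simp only [Finset.coe_map, Set.mem_image] at ha hb
  obtain ⟨a', ha', rfl⟩ := ha
  obtain ⟨b', hb', rfl⟩ := hb
  exact f.map_adj_iff.mpr (hs.isClique ha' hb' (fun e => hab (by rw [e])))

lemma one_le_cliqueNumber {V : Type*} [Finite V] {G : SimpleGraph V} (v : V) :
    1 ≤ cliqueNumber G :=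
  le_csSup (cliqueSet_bddAbove G) ⟨{v}, by simp⟩

/-- Embedding of induced subgraph of a subset. -/
def induceEmb {V : Type*} (G : SimpleGraph V) {A S : Set V} (hAS : A ⊆ S) :
    G.induce A ↪g G.induce S :=
  ⟨⟨Set.inclusion hAS, Set.inclusion_injective hAS⟩, Iff.rfl⟩

lemma colorable_union {V : Type*} {G : SimpleGraph V} {S A B : Set V}
    (hU : A ∪ B = S) {m k : ℕ}
    (hA : (G.induce A).Colorable m) (hB : (G.induce B).Colorable k) :
    (G.induce S).Colorable (m + k) := by
  classical
  obtain ⟨c1⟩ := hA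
  obtain ⟨c2⟩ := hB
  have hmem : ∀ x : ↥S, ↑x ∉ A → ↑x ∈ B := by
    intro x hx
    have hx2 : (↑x : V) ∈ A ∪ B := by rw [hU]; exact x.2
    exact hx2.resolve_left hx
  refine ⟨Coloring.mk
    (fun x => if hx : ↑x ∈ A then Fin.castAdd k (c1 ⟨x, hx⟩) else Fin.natAdd m (c2 ⟨x, hmem x hx⟩))
    ?_⟩
  intro v w hadj
  have hvw : G.Adj ↑v ↑w := hadj
  by_cases hv : ↑v ∈ A <;> by_cases hw : ↑w ∈ A
  · have h1 := c1.valid (show (G.induce A).Adj ⟨v, hv⟩ ⟨w, hw⟩ from hvw)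
    simp only [dif_pos hv, dif_pos hw, ne_eq, Fin.ext_iff, Fin.coe_castAdd]
    exact fun e => h1 (Fin.ext e)
  · simp only [dif_pos hv, dif_neg hw, ne_eq, Fin.ext_iff, Fin.coe_castAdd, Fin.coe_natAdd]
    have := (c1 ⟨v, hv⟩).isLt; omega
  · simp only [dif_neg hv, dif_pos hw, ne_eq, Fin.ext_iff, Fin.coe_castAdd, Fin.coe_natAdd]
    have := (c1 ⟨w, hw⟩).isLt; omega
  · have h2 := c2.valid (show (G.induce B).Adj ⟨v, hmem v hv⟩ ⟨w, hmem w hw⟩ from hvw)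
    simp only [dif_neg hv, dif_neg hw, ne_eq, Fin.ext_iff, Fin.coe_natAdd]
    exact fun e => h2 (Fin.ext (by omega))


lemma colorable_of_perfect {V : Type*} [Finite V] {G : SimpleGraph V} {A : Set V}
    (hA : IsPerfectGraph (G.induce A)) :
    (G.induce A).Colorable (cliqueNumber (G.induce A)) := by
  set H := G.induce A
  let e := induceUnivIso H
  have hcl : cliqueNumber (H.induce Set.univ) = cliqueNumber H :=
    le_antisymm (cliqueNumber_le_of_embedding e.toEmbedding)
      (cliqueNumber_le_of_embedding e.symm.toEmbedding)
  have h1 : (H.induce Set.univ).Colorable (cliqueNumber H) := by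
    rw [← hcl]
    exact chromaticNumber_le_iff_colorable.mp (le_of_eq (hA Set.univ))
  exact Colorable.of_hom e.symm.toEmbedding.toHom h1

lemma tri_succ (n : ℕ) : n + 1 + n * (n + 1) / 2 = (n + 1) * (n + 2) / 2 := by
  have h : (n + 1) * (n + 2) = n * (n + 1) + (n + 1) * 2 := by ring
  rw [h, Nat.add_mul_div_right _ _ (by norm_num : (0:ℕ) < 2)]
  omega

lemma colorable_of_empty {V : Type*} {G : SimpleGraph V} {S : Set V} (hS : ¬S.Nonempty) {n : ℕ} :
    (G.induce S).Colorable n := by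
  haveI : IsEmpty ↥S := Set.isEmpty_coe_sort.mpr (Set.not_nonempty_iff_eq_empty.mp hS)
  exact ⟨⟨fun x => isEmptyElim x, fun {a} => isEmptyElim a⟩⟩

lemma main_ind {V : Type*} [Finite V] (G : SimpleGraph V) (h : PerfectlyDivisible G) :
    ∀ n : ℕ, ∀ S : Set V, cliqueNumber (G.induce S) ≤ n →
      (G.induce S).Colorable (n * (n + 1) / 2) := by
  intro n
  induction n with
  | zero =>
    intro S hS
    by_cases hne : S.Nonempty
    · obtain ⟨x, hx⟩ := hne
      have h1 := one_le_cliqueNumber (G := G.induce S) (⟨x, hx⟩ : ↥S)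
      omega
    · exact colorable_of_empty hne
  | succ n ih =>
    intro S hS
    by_cases hne : S.Nonempty
    · obtain ⟨A, B, hU, hI, hperf, hlt⟩ := h S hne
      have hAS : A ⊆ S := by rw [← hU]; exact Set.subset_union_left
      have hBS : B ⊆ S := by rw [← hU]; exact Set.subset_union_right
      have hB : cliqueNumber (G.induce B) ≤ n := by omega
      have cB := ih B hB
      have hA : cliqueNumber (G.induce A) ≤ n + 1 :=
        le_trans (cliqueNumber_le_of_embedding (induceEmb G hAS)) hS
      have cA := (colorable_of_perfect hperf).mono hA
      have := colorable_union hU cA cB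
      rwa [tri_succ] at this
    · exact colorable_of_empty hne

/-- If G is perfectly divisible then χ(G) ≤ ω(G)(ω(G)+1)/2. -/
theorem stmt_0 {V : Type*} [Fintype V] (G : SimpleGraph V)
    (h : PerfectlyDivisible G) :
    G.chromaticNumber ≤ ((cliqueNumber G * (cliqueNumber G + 1) / 2 : ℕ) : ℕ∞) := by
  rw [chromaticNumber_le_iff_colorable]
  have hcl : cliqueNumber (G.induce Set.univ) ≤ cliqueNumber G :=
    cliqueNumber_le_of_embedding (induceUnivIso G).toEmbedding
  have := main_ind G h (cliqueNumber G) Set.univ hcl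
  exact Colorable.of_hom (induceUnivIso G).symm.toEmbedding.toHom this
end

section
/- Let G be a fork-free graph containing an induced odd hole C = v_1 v_2 … v_n v_1 (n ≥ 5 odd). If u and v are adjacent vertices outside V(C) such that u has a neighbor on C and v has no neighbor on C, then either N(u) ∩ V(C) = {v_j, v_{j+1}} for some j (indices mod n), or u is complete to V(C). -/
open SimpleGraph

lemma fork_embed {V : Type*} (G : SimpleGraph V) (a0 a1 a2 a3 a4 : V)
 (d01 : a0 ≠ a1) (d02 : a0 ≠ a2) (d03 : a0 ≠ a3) (d04 : a0 ≠ a4)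
 (d12 : a1 ≠ a2) (d13 : a1 ≠ a3) (d14 : a1 ≠ a4)
 (d23 : a2 ≠ a3) (d24 : a2 ≠ a4) (d34 : a3 ≠ a4)
 (e20 : G.Adj a2 a0) (e21 : G.Adj a2 a1) (e23 : G.Adj a2 a3) (e34 : G.Adj a3 a4)
 (n01 : ¬G.Adj a0 a1) (n03 : ¬G.Adj a0 a3) (n04 : ¬G.Adj a0 a4)
 (n13 : ¬G.Adj a1 a3) (n14 : ¬G.Adj a1 a4) (n24 : ¬G.Adj a2 a4) :
 Nonempty (fork ↪g G) := by
  refine ⟨⟨⟨![a0,a1,a2,a3,a4], ?_⟩, ?_⟩⟩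
  · intro i j h
    fin_cases i <;> fin_cases j <;> simp_all
  · intro i j
    fin_cases i <;> fin_cases j <;>
      simp +decide [fork, Matrix.cons_val_zero, Matrix.cons_val_one] <;>
      first
        | exact G.loopless _
        | assumption
        | exact e20.symm | exact e21.symm | exact e23.symm | exact e34.symm
        | exact fun h => n01 h.symm | exact fun h => n03 h.symm | exact fun h => n04 h.symm
        | exact fun h => n13 h.symm | exact fun h => n14 h.symm | exact fun h => n24 h.symm

/-- Lemma (Wu–Xu): in a fork-free graph with an induced odd hole C, if u ~ w are outside C,
u has a neighbor on C and w has none, then N(u) ∩ V(C) is two consecutive vertices,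
or u is complete to V(C). -/
theorem stmt_2 {V : Type*} (G : SimpleGraph V) (hfork : ForkFree G)
    (n : ℕ) (hn5 : 5 ≤ n) (hodd : Odd n)
    (v : ZMod n → V) (hC : IsInducedCycle G v)
    (u w : V) (huw : G.Adj u w)
    (hu : u ∉ Set.range v) (hw : w ∉ Set.range v)
    (huC : ∃ i : ZMod n, G.Adj u (v i)) (hwC : ∀ i : ZMod n, ¬ G.Adj w (v i)) :
    (∃ j : ZMod n, ∀ i : ZMod n, G.Adj u (v i) ↔ (i = j ∨ i = j + 1)) ∨
    (∀ i : ZMod n, G.Adj u (v i)) := by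
  obtain ⟨hv, ha⟩ := hC
  haveI : NeZero n := ⟨by omega⟩
  have hcast : ∀ m : ℕ, 0 < m → m < n → ((m : ZMod n) ≠ 0) := by
    intro m hm hmn h
    rw [ZMod.natCast_eq_zero_iff] at h
    have := Nat.le_of_dvd hm h
    omega
  have h1 : (1 : ZMod n) ≠ 0 := by
    have := hcast 1 (by norm_num) (by omega); simpa using this
  have h2 : (2 : ZMod n) ≠ 0 := by
    have := hcast 2 (by norm_num) (by omega); simpa using this
  have h3 : (3 : ZMod n) ≠ 0 := by
    have := hcast 3 (by norm_num) (by omega); simpa using this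
  have h4 : (4 : ZMod n) ≠ 0 := by
    have := hcast 4 (by norm_num) (by omega); simpa using this
  have nadj : ∀ i k : ZMod n, i ≠ k + 1 → k ≠ i + 1 → ¬ G.Adj (v i) (v k) := by
    intro i k hik hki h
    rcases (ha i k).1 h with h' | h'
    · exact hki h'
    · exact hik h'
  have adj : ∀ i : ZMod n, G.Adj (v i) (v (i + 1)) := fun i => (ha i (i + 1)).2 (Or.inl rfl)
  have vne : ∀ i k : ZMod n, i ≠ k → v i ≠ v k := fun i k h hh => h (hv hh)
  have hune : ∀ i, u ≠ v i := fun i h => hu ⟨i, h.symm⟩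
  have hwne : ∀ i, w ≠ v i := fun i h => hw ⟨i, h.symm⟩
  have huwne : u ≠ w := huw.ne
  have hwCn : ∀ i, ¬ G.Adj (v i) w := fun i h => hwC i h.symm
  -- Lemma A: every neighbor of u on C has a consecutive companion
  have lemA : ∀ j : ZMod n, G.Adj u (v j) →
      (G.Adj u (v (j - 1)) ∨ G.Adj u (v (j + 1))) := by
    intro j hj
    by_contra hcon
    push_neg at hcon
    obtain ⟨hm, hp⟩ := hcon
    refine (fork_embed G (v (j-1)) (v (j+1)) (v j) u w
      ?_ ?_ ?_ ?_ ?_ ?_ ?_ ?_ ?_ ?_ ?_ ?_ ?_ ?_ ?_ ?_ ?_ ?_ ?_ ?_).elim hfork.false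
    · exact vne _ _ (fun h => h2 (by linear_combination -h))
    · exact vne _ _ (fun h => h1 (by linear_combination -h))
    · exact fun h => hune _ h.symm
    · exact fun h => hwne _ h.symm
    · exact vne _ _ (fun h => h1 (by linear_combination h))
    · exact fun h => hune _ h.symm
    · exact fun h => hwne _ h.symm
    · exact fun h => hune _ h.symm
    · exact fun h => hwne _ h.symm
    · exact huwne
    · exact (ha j (j-1)).2 (Or.inr (by ring))
    · exact (adj j)
    · exact hj.symm
    · exact huw
    · exact nadj _ _ (fun h => h3 (by linear_combination -h)) (fun h => h1 (by linear_combination h))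
    · exact fun h => hm h.symm
    · exact hwCn _
    · exact fun h => hp h.symm
    · exact hwCn _
    · exact fun h => hwC _ h.symm
  -- Lemma C: spread to j-1
  have lemC : ∀ j k : ZMod n, G.Adj u (v j) → G.Adj u (v k) →
      k ≠ j - 2 → k ≠ j - 1 → k ≠ j → k ≠ j + 1 → G.Adj u (v (j - 1)) := by
    intro j k hj hk hk1 hk2 hk3 hk4
    by_contra hm
    refine (fork_embed G w (v k) u (v j) (v (j-1))
      ?_ ?_ ?_ ?_ ?_ ?_ ?_ ?_ ?_ ?_ ?_ ?_ ?_ ?_ ?_ ?_ ?_ ?_ ?_ ?_).elim hfork.false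
    · exact hwne _
    · exact fun h => huwne h.symm
    · exact hwne _
    · exact hwne _
    · exact fun h => hune _ h.symm
    · exact vne _ _ hk3
    · exact vne _ _ hk2
    · exact hune _
    · exact hune _
    · exact vne _ _ (fun h => h1 (by linear_combination h))
    · exact huw
    · exact hk
    · exact hj
    · exact ((ha (j-1) j).2 (Or.inl (by ring))).symm
    · exact fun h => hwC _ h
    · exact fun h => hwC _ h
    · exact fun h => hwC _ h
    · exact nadj _ _ (fun h => hk4 h) (fun h => hk2 (by linear_combination -h))
    · exact nadj _ _ (fun h => hk3 (by linear_combination h)) (fun h => hk1 (by linear_combination -h))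
    · exact hm
  -- Lemma C': spread to j+1
  have lemC' : ∀ j k : ZMod n, G.Adj u (v j) → G.Adj u (v k) →
      k ≠ j - 1 → k ≠ j → k ≠ j + 1 → k ≠ j + 2 → G.Adj u (v (j + 1)) := by
    intro j k hj hk hk1 hk2 hk3 hk4
    by_contra hm
    refine (fork_embed G w (v k) u (v j) (v (j+1))
      ?_ ?_ ?_ ?_ ?_ ?_ ?_ ?_ ?_ ?_ ?_ ?_ ?_ ?_ ?_ ?_ ?_ ?_ ?_ ?_).elim hfork.false
    · exact hwne _
    · exact fun h => huwne h.symm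
    · exact hwne _
    · exact hwne _
    · exact fun h => hune _ h.symm
    · exact vne _ _ hk2
    · exact vne _ _ hk3
    · exact hune _
    · exact hune _
    · exact vne _ _ (fun h => h1 (by linear_combination -h))
    · exact huw
    · exact hk
    · exact hj
    · exact adj j
    · exact fun h => hwC _ h
    · exact fun h => hwC _ h
    · exact fun h => hwC _ h
    · exact nadj _ _ (fun h => hk3 h) (fun h => hk1 (by linear_combination -h))
    · exact nadj _ _ (fun h => hk4 (by linear_combination h)) (fun h => hk2 (by linear_combination -h))
    · exact hm
  -- Lemma D: three consecutive neighbors imply completeness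
  have lemD : ∀ j : ZMod n, G.Adj u (v (j - 1)) → G.Adj u (v j) → G.Adj u (v (j + 1)) →
      ∀ i : ZMod n, G.Adj u (v i) := by
    intro j hjm hj hjp i
    have key : ∀ m : ℕ, G.Adj u (v (j - 1 + m)) ∧ G.Adj u (v (j + m)) ∧
        G.Adj u (v (j + 1 + m)) := by
      intro m
      induction m with
      | zero => simpa using ⟨hjm, hj, hjp⟩
      | succ m ih =>
        obtain ⟨p1, p2, p3⟩ := ih
        have hc : ((m + 1 : ℕ) : ZMod n) = (m : ZMod n) + 1 := by push_cast; ring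
        have hnext : G.Adj u (v (j + 1 + m + 1)) := by
          refine lemC' (j + 1 + m) (j - 1 + m) p3 p1 ?_ ?_ ?_ ?_
          · exact fun h => h1 (by linear_combination -h)
          · exact fun h => h2 (by linear_combination -h)
          · exact fun h => h3 (by linear_combination -h)
          · exact fun h => h4 (by linear_combination -h)
        refine ⟨?_, ?_, ?_⟩
        · rw [hc]; convert p2 using 2; ring
        · rw [hc]; convert p3 using 2; ring
        · rw [hc]; convert hnext using 2; ring
    have := (key (i - (j - 1)).val).1
    rwa [ZMod.natCast_zmod_val, add_sub_cancel] at this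
  -- Main argument
  obtain ⟨j0, hj0⟩ := huC
  by_cases hall : ∀ i : ZMod n, G.Adj u (v i)
  · exact Or.inr hall
  left
  obtain ⟨j, hj, hj1⟩ : ∃ j : ZMod n, G.Adj u (v j) ∧ G.Adj u (v (j + 1)) := by
    rcases lemA j0 hj0 with h | h
    · exact ⟨j0 - 1, h, by rwa [sub_add_cancel]⟩
    · exact ⟨j0, hj0, h⟩
  refine ⟨j, fun i => ⟨?_, ?_⟩⟩
  · intro hi
    by_contra hii
    push_neg at hii
    obtain ⟨hij, hij1⟩ := hii
    apply hall
    rcases eq_or_ne i (j - 1) with rfl | h_1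
    · exact lemD j hi hj hj1
    rcases eq_or_ne i (j + 2) with rfl | h_2
    · refine lemD (j + 1) ?_ hj1 ?_
      · convert hj using 2; ring
      · convert hi using 2; ring
    rcases eq_or_ne i (j - 2) with rfl | h_3
    · rcases lemA (j - 2) hi with h | h
      · have h' : G.Adj u (v (j - 3)) := by convert h using 2; ring
        refine lemD j (lemC j (j - 3) hj h' ?_ ?_ ?_ ?_) hj hj1
        · exact fun h => h1 (by linear_combination -h)
        · exact fun h => h2 (by linear_combination -h)
        · exact fun h => h3 (by linear_combination -h)
        · exact fun h => h4 (by linear_combination -h)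
      · have h' : G.Adj u (v (j - 1)) := by convert h using 2; ring
        exact lemD j h' hj hj1
    · exact lemD j (lemC j i hj hi h_3 h_1 hij hij1) hj hj1
  · rintro (rfl | rfl)
    · exact hj
    · exact hj1
end

section
/- Let G be a fork-free graph containing an induced odd balloon with odd hole C = v_1 … v_n v_1, center u complete to {v_1, v_2} and anticomplete to the rest of C, and pendant vertex s. Let T be the set of vertices in N(u) \ {v_1, v_2} nonadjacent to s, and set T_1 = {v ∈ T : N(v) ∩ V(C) = {v_1,v_2}}, T_2 = {v ∈ T : N(v) ∩ V(C) = {v_1,v_2,v_3}}, T_3 = {v ∈ T : N(v) ∩ V(C) = {v_1,v_2,v_n}}. Then T_1 ∪ T_2 ∪ T_3 is a clique. -/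
open SimpleGraph

open SimpleGraph in
private lemma no_fork {V : Type*} {G : SimpleGraph V} (hfork : ForkFree G)
    (a b c d e : V)
    (hab : a ≠ b) (had : a ≠ d) (hae : a ≠ e) (hbd : b ≠ d) (hbe : b ≠ e) (hce : c ≠ e)
    (eca : G.Adj c a) (ecb : G.Adj c b) (ecd : G.Adj c d) (ede : G.Adj d e)
    (nab : ¬G.Adj a b) (nad : ¬G.Adj a d) (nae : ¬G.Adj a e)
    (nbd : ¬G.Adj b d) (nbe : ¬G.Adj b e) (nce : ¬G.Adj c e) : False := by
  have hac : a ≠ c := eca.ne'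
  have hbc : b ≠ c := ecb.ne'
  have hcd : c ≠ d := ecd.ne
  have hde : d ≠ e := ede.ne
  apply hfork.false
  refine ⟨⟨![a,b,c,d,e], ?_⟩, ?_⟩
  · intro i j h
    fin_cases i <;> fin_cases j <;> simp_all
  · intro i j
    fin_cases i <;> fin_cases j <;>
      simp [fork, SimpleGraph.fromRel_adj] <;>
      first
        | assumption
        | (exact fun h => nab h.symm)
        | (exact fun h => nad h.symm)
        | (exact fun h => nae h.symm)
        | (exact fun h => nbd h.symm)
        | (exact fun h => nbe h.symm)
        | (exact fun h => nce h.symm)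
        | exact eca.symm
        | exact ecb.symm
        | exact ecd.symm
        | exact ede.symm


/-- With T the set of neighbors of u (other than v₁,v₂) nonadjacent to s, the union
T₁ ∪ T₂ ∪ T₃ of those whose neighborhood on C is exactly {v₁,v₂}, {v₁,v₂,v₃},
or {v₁,v₂,vₙ} respectively, is a clique. -/
theorem stmt_5 {V : Type*} (G : SimpleGraph V) (hfork : ForkFree G)
    (n : ℕ) (hn5 : 5 ≤ n) (hodd : Odd n)
    (v : ZMod n → V) (hC : IsInducedCycle G v)
    (u s : V) (hu : u ∉ Set.range v) (hs : s ∉ Set.range v)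
    (hus : G.Adj u s)
    (hu1 : G.Adj u (v 1)) (hu2 : G.Adj u (v 2))
    (huC : ∀ i : ZMod n, i ≠ 1 → i ≠ 2 → ¬ G.Adj u (v i))
    (hsC : ∀ i : ZMod n, ¬ G.Adj s (v i)) :
    G.IsClique {t : V | (G.Adj u t ∧ t ≠ v 1 ∧ t ≠ v 2 ∧ ¬ G.Adj t s) ∧
      ((∀ i : ZMod n, G.Adj t (v i) ↔ (i = 1 ∨ i = 2)) ∨
       (∀ i : ZMod n, G.Adj t (v i) ↔ (i = 1 ∨ i = 2 ∨ i = 3)) ∨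
       (∀ i : ZMod n, G.Adj t (v i) ↔ (i = 1 ∨ i = 2 ∨ i = 0)))} := by
  obtain ⟨hinj, hadjC⟩ := hC
  have hz : ∀ k : ℕ, 0 < k → k < 5 → ((k : ZMod n)) ≠ 0 := by
    intro k hk1 hk2 h
    haveI : NeZero n := ⟨by omega⟩
    rw [ZMod.natCast_eq_zero_iff] at h
    have := Nat.le_of_dvd hk1 h
    omega
  have h1 : (1 : ZMod n) ≠ 0 := by
    have := hz 1 (by norm_num) (by norm_num); push_cast at this; exact this
  have h2 : (2 : ZMod n) ≠ 0 := by
    have := hz 2 (by norm_num) (by norm_num); push_cast at this; exact this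
  have h3 : (3 : ZMod n) ≠ 0 := by
    have := hz 3 (by norm_num) (by norm_num); push_cast at this; exact this
  have h4 : (4 : ZMod n) ≠ 0 := by
    have := hz 4 (by norm_num) (by norm_num); push_cast at this; exact this
  have e31 : (3 : ZMod n) ≠ 1 := fun h => h2 (by linear_combination h)
  have e32 : (3 : ZMod n) ≠ 2 := fun h => h1 (by linear_combination h)
  have e01 : (0 : ZMod n) ≠ 1 := fun h => h1 (by linear_combination -h)
  have e02 : (0 : ZMod n) ≠ 2 := fun h => h2 (by linear_combination -h)
  have e41 : (4 : ZMod n) ≠ 1 := fun h => h3 (by linear_combination h)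
  have e42 : (4 : ZMod n) ≠ 2 := fun h => h2 (by linear_combination h)
  have e43 : (4 : ZMod n) ≠ 3 := fun h => h1 (by linear_combination h)
  have em1 : (-1 : ZMod n) ≠ 1 := fun h => h2 (by linear_combination -h)
  have em2 : (-1 : ZMod n) ≠ 2 := fun h => h3 (by linear_combination -h)
  have em3 : (-1 : ZMod n) ≠ 3 := fun h => h4 (by linear_combination -h)
  have e24 : (2 : ZMod n) ≠ 4 := fun h => h2 (by linear_combination -h)
  have e1m : (1 : ZMod n) ≠ -1 := fun h => em1 h.symm
  have e03 : (0 : ZMod n) ≠ 3 := fun h => h3 (by linear_combination -h)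
  intro t ht t' ht' hne
  simp only [Set.mem_setOf_eq] at ht ht'
  obtain ⟨⟨hut, ht1, ht2, hts⟩, htype⟩ := ht
  obtain ⟨⟨hut', ht1', ht2', hts'⟩, htype'⟩ := ht'
  by_contra hadj
  have hta1 : G.Adj t (v 1) := by
    rcases htype with h | h | h <;> exact (h 1).2 (by simp)
  have hta1' : G.Adj t' (v 1) := by
    rcases htype' with h | h | h <;> exact (h 1).2 (by simp)
  have hta2 : G.Adj t (v 2) := by
    rcases htype with h | h | h <;> exact (h 2).2 (by simp)
  have hta2' : G.Adj t' (v 2) := by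
    rcases htype' with h | h | h <;> exact (h 2).2 (by simp)
  have hnr : ∀ w, G.Adj u w → w ≠ v 1 → w ≠ v 2 → w ∉ Set.range v := by
    rintro w hw hw1 hw2 ⟨j, rfl⟩
    by_cases hj1 : j = 1
    · exact hw1 (by rw [hj1])
    by_cases hj2 : j = 2
    · exact hw2 (by rw [hj2])
    exact huC j hj1 hj2 hw
  have htr : t ∉ Set.range v := hnr t hut ht1 ht2
  have htr' : t' ∉ Set.range v := hnr t' hut' ht1' ht2'
  have htns : t ≠ s := fun h => hsC 1 (h ▸ hta1)
  have htns' : t' ≠ s := fun h => hsC 1 (h ▸ hta1')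
  -- helper for the case where some hole vertex v i distinguishes t and t'
  have hdiff : ∀ x y : V, G.Adj u x → G.Adj u y → ¬ G.Adj x s → ¬ G.Adj y s →
      ¬ G.Adj x y → x ≠ y → x ∉ Set.range v → x ≠ s → y ≠ s →
      ∀ i : ZMod n, i ≠ 1 → i ≠ 2 → G.Adj y (v i) → ¬ G.Adj x (v i) → False := by
    intro x y hux huy hxs hys hxy hxyne hxr hxns hyns i hi1 hi2 hyi hxi
    exact no_fork hfork x s u y (v i) hxns hxyne (fun h => hxr ⟨i, h.symm⟩)
      (fun h => hyns h.symm) (fun h => hs ⟨i, h.symm⟩) (fun h => hu ⟨i, h.symm⟩)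
      hux hus huy hyi hxs hxy hxi (fun h => hys h.symm) (hsC i)
      (huC i hi1 hi2)
  -- helper for the case where neither t nor t' sees v 0 nor v (-1)
  have sameA : ¬G.Adj t (v 0) → ¬G.Adj t (v (-1)) → ¬G.Adj t' (v 0) →
      ¬G.Adj t' (v (-1)) → False := by
    intro a1 a2 b1 b2
    exact no_fork hfork t t' (v 1) (v 0) (v (-1)) hne
      (fun h => htr ⟨0, h.symm⟩) (fun h => htr ⟨-1, h.symm⟩)
      (fun h => htr' ⟨0, h.symm⟩) (fun h => htr' ⟨-1, h.symm⟩)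
      (fun h => e1m (hinj h))
      hta1.symm hta1'.symm
      ((hadjC 1 0).2 (Or.inr (by ring)))
      ((hadjC 0 (-1)).2 (Or.inr (by ring)))
      hadj a1 a2 b1 b2
      (by rw [hadjC]; rintro (h | h)
          · exact em2 (by linear_combination h)
          · exact h1 (by linear_combination h))
  -- helper for the case where both t and t' see v 0 but not v 3, v 4
  have sameB : ¬G.Adj t (v 3) → ¬G.Adj t (v 4) → ¬G.Adj t' (v 3) →
      ¬G.Adj t' (v 4) → False := by
    intro a1 a2 b1 b2
    exact no_fork hfork t t' (v 2) (v 3) (v 4) hne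
      (fun h => htr ⟨3, h.symm⟩) (fun h => htr ⟨4, h.symm⟩)
      (fun h => htr' ⟨3, h.symm⟩) (fun h => htr' ⟨4, h.symm⟩)
      (fun h => e24 (hinj h))
      hta2.symm hta2'.symm
      ((hadjC 2 3).2 (Or.inl (by ring)))
      ((hadjC 3 4).2 (Or.inl (by ring)))
      hadj a1 a2 b1 b2
      (by rw [hadjC]; rintro (h | h)
          · exact h1 (by linear_combination h)
          · exact h3 (by linear_combination -h))
  have hadj' : ¬ G.Adj t' t := fun h => hadj h.symm
  rcases htype with h | h | h <;> rcases htype' with h' | h' | h'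
  · exact sameA (by simp [h 0, e01, e02]) (by simp [h (-1), em1, em2])
      (by simp [h' 0, e01, e02]) (by simp [h' (-1), em1, em2])
  · -- t type 1, t' type 2 : v 3 distinguishes
    exact hdiff t t' hut hut' hts hts' hadj hne htr htns htns' 3 e31 e32
      ((h' 3).2 (by simp)) (by simp [h 3, e31, e32])
  · -- t type 1, t' type 3 : v 0 distinguishes
    exact hdiff t t' hut hut' hts hts' hadj hne htr htns htns' 0 e01 e02
      ((h' 0).2 (by simp)) (by simp [h 0, e01, e02])
  · -- t type 2, t' type 1
    exact hdiff t' t hut' hut hts' hts hadj' hne.symm htr' htns' htns 3 e31 e32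
      ((h 3).2 (by simp)) (by simp [h' 3, e31, e32])
  · exact sameA (by simp [h 0, e01, e02, e03])
      (by simp [h (-1), em1, em2, em3])
      (by simp [h' 0, e01, e02, e03])
      (by simp [h' (-1), em1, em2, em3])
  · -- t type 2, t' type 3 : v 3 distinguishes (t sees it, t' does not)
    exact hdiff t' t hut' hut hts' hts hadj' hne.symm htr' htns' htns 3 e31 e32
      ((h 3).2 (by simp)) (by simp [h' 3, e31, e32, h3])
  · -- t type 3, t' type 1 : v 0 distinguishes
    exact hdiff t' t hut' hut hts' hts hadj' hne.symm htr' htns' htns 0 e01 e02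
      ((h 0).2 (by simp)) (by simp [h' 0, e01, e02])
  · -- t type 3, t' type 2 : v 3 distinguishes (t' sees it)
    exact hdiff t t' hut hut' hts hts' hadj hne htr htns htns' 3 e31 e32
      ((h' 3).2 (by simp)) (by simp [h 3, e31, e32, h3])
  · exact sameB (by simp [h 3, e31, e32, h3]) (by simp [h 4, e41, e42, h4])
      (by simp [h' 3, e31, e32, h3]) (by simp [h' 4, e41, e42, h4])
end

section
/- Let G be a fork-free graph containing an induced odd balloon with odd hole C = v_1 … v_n v_1 (n ≥ 5 odd), center u complete to {v_1, v_2} and anticomplete to {v_3, …, v_n}, and pendant s. Let D be the set of vertices in N(u) \ {v_1, v_2} that are anticomplete to V(C). Then D is a clique. -/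
open SimpleGraph

/-- The set D of vertices of N(u) ∖ {v₁,v₂} anticomplete to V(C) is a clique. -/
theorem stmt_11 {V : Type*} (G : SimpleGraph V) (hfork : ForkFree G)
    (n : ℕ) (hn5 : 5 ≤ n) (hodd : Odd n)
    (v : ZMod n → V) (hC : IsInducedCycle G v)
    (u s : V) (hu : u ∉ Set.range v) (hs : s ∉ Set.range v)
    (hus : G.Adj u s)
    (hu1 : G.Adj u (v 1)) (hu2 : G.Adj u (v 2))
    (huC : ∀ i : ZMod n, i ≠ 1 → i ≠ 2 → ¬ G.Adj u (v i))
    (hsC : ∀ i : ZMod n, ¬ G.Adj s (v i)) :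
    G.IsClique {d : V | G.Adj u d ∧ d ≠ v 1 ∧ d ≠ v 2 ∧ ∀ i : ZMod n, ¬ G.Adj d (v i)} := by

  intro d hd e he hne
  obtain ⟨hud, hd1, hd2, hdC⟩ := hd
  obtain ⟨hue, he1, he2, heC⟩ := he
  by_contra hde
  haveI : NeZero n := ⟨by omega⟩
  haveI : Fact (1 < n) := ⟨by omega⟩
  have h01 : (0 : ZMod n) ≠ 1 := by
    intro h
    have := congrArg ZMod.val h
    rw [ZMod.val_zero, ZMod.val_one] at this
    omega
  have h02 : (0 : ZMod n) ≠ 2 := by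
    intro h
    have := congrArg ZMod.val h
    rw [ZMod.val_zero, show ((2 : ZMod n)) = ((2 : ℕ) : ZMod n) by push_cast; ring,
      ZMod.val_natCast_of_lt (by omega)] at this
    omega
  have hv10 : G.Adj (v 1) (v 0) := (hC.2 1 0).2 (Or.inr (zero_add 1).symm)
  have hu0 : ¬ G.Adj u (v 0) := huC 0 h01 h02
  have hdv0 : d ≠ v 0 := fun h => hdC 1 (h ▸ hv10.symm)
  have hdv1 : d ≠ v 1 := hd1
  have hev0 : e ≠ v 0 := fun h => heC 1 (h ▸ hv10.symm)
  have hdu : d ≠ u := fun h => G.irrefl (h ▸ hud)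
  have heu : e ≠ u := fun h => G.irrefl (h ▸ hue)
  have hde' : ¬ G.Adj e d := fun h => hde h.symm
  have huv1 : u ≠ v 1 := fun h => hu ⟨1, h.symm⟩
  have huv0 : u ≠ v 0 := fun h => hu ⟨0, h.symm⟩
  have hv01 : v 1 ≠ v 0 := fun h => h01 (hC.1 h.symm)
  have hnu1 : ¬ G.Adj d (v 1) := hdC 1
  have hne1 : ¬ G.Adj e (v 1) := heC 1
  have hnd0 : ¬ G.Adj d (v 0) := hdC 0
  have hne0 : ¬ G.Adj e (v 0) := heC 0
  let f : Fin 5 → V := ![d, e, u, v 1, v 0]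
  have hinj : Function.Injective f := by
    intro a b hab
    fin_cases a <;> fin_cases b <;>
      simp_all [f, Matrix.cons_val_zero, Matrix.cons_val_one] <;>
      first
        | rfl
        | (exact absurd hab (by tauto))
        | (exact absurd hab.symm (by tauto))
  refine hfork.false ⟨⟨f, hinj⟩, ?_⟩
  intro a b
  have hsym := G.adj_comm
  fin_cases a <;> fin_cases b <;>
    simp [f, fork, SimpleGraph.fromRel_adj] <;>
    first
      | exact hud
      | exact hue
      | exact hu1
      | exact hv10
      | exact hud.symm
      | exact hue.symm
      | exact hu1.symm
      | exact hv10.symm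
      | (intro h; first
          | exact hde h | exact hde' h | exact hnu1 h | exact hne1 h
          | exact hnd0 h | exact hne0 h | exact hu0 h
          | exact hde h.symm | exact hde' h.symm | exact hnu1 h.symm | exact hne1 h.symm
          | exact hnd0 h.symm | exact hne0 h.symm | exact hu0 h.symm)
end

section
/- Let G be a fork-free graph with ω(G) = 3 containing an induced odd balloon with hole C = v_1 … v_n v_1, center u (complete to {v_1,v_2}, anticomplete to rest of C) and pendant s. Then every vertex of N(u) \ {v_1, v_2, s} is complete to the set D of neighbors of u (other than v_1, v_2) that are anticomplete to V(C). -/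
open SimpleGraph

lemma not_dvd_small {n : ℕ} (hn : 5 ≤ n) {c : ℤ} (h0 : c ≠ 0) (h1 : c < 5) (h2 : -5 < c) :
    ¬ (n : ℤ) ∣ c := by
  intro h
  have habs : (n:ℤ) ∣ |c| := (dvd_abs _ _).mpr h
  have hle : (n:ℤ) ≤ |c| := Int.le_of_dvd (abs_pos.mpr h0) habs
  have h5 : (5:ℤ) ≤ (n:ℤ) := by exact_mod_cast hn
  rcases abs_cases c with ⟨he, _⟩ | ⟨he, _⟩ <;> omega

lemma zmod_ne {n : ℕ} (hn : 5 ≤ n) (a b : ℤ) (h : a ≠ b) (h1 : a - b < 5) (h2 : b - a < 5) :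
    ((a : ℤ) : ZMod n) ≠ ((b : ℤ) : ZMod n) := by
  intro hh
  rw [ZMod.intCast_eq_intCast_iff] at hh
  exact not_dvd_small hn (c := b - a) (by omega) (by omega) (by omega) hh.dvd

lemma fork_free_contra {V : Type*} {G : SimpleGraph V} (hf : ForkFree G)
    (a b c x y : V)
    (hab : a ≠ b) (hac : a ≠ c) (hax : a ≠ x) (hay : a ≠ y)
    (hbc : b ≠ c) (hbx : b ≠ x) (hby : b ≠ y)
    (hcx : c ≠ x) (hcy : c ≠ y) (hxy : x ≠ y)
    (e1 : G.Adj c a) (e2 : G.Adj c b) (e3 : G.Adj c x) (e4 : G.Adj x y)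
    (n1 : ¬ G.Adj a b) (n2 : ¬ G.Adj a x) (n3 : ¬ G.Adj a y)
    (n4 : ¬ G.Adj b x) (n5 : ¬ G.Adj b y) (n6 : ¬ G.Adj c y) : False := by
  have e1' := e1.symm; have e2' := e2.symm; have e3' := e3.symm; have e4' := e4.symm
  have n1' : ¬ G.Adj b a := fun h => n1 h.symm
  have n2' : ¬ G.Adj x a := fun h => n2 h.symm
  have n3' : ¬ G.Adj y a := fun h => n3 h.symm
  have n4' : ¬ G.Adj x b := fun h => n4 h.symm
  have n5' : ¬ G.Adj y b := fun h => n5 h.symm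
  have n6' : ¬ G.Adj y c := fun h => n6 h.symm
  apply hf.false
  refine ⟨⟨![a,b,c,x,y], ?_⟩, ?_⟩
  · intro i j hij
    fin_cases i <;> fin_cases j <;> simp_all
  · intro i j
    change G.Adj (![a,b,c,x,y] i) (![a,b,c,x,y] j) ↔ fork.Adj i j
    fin_cases i <;> fin_cases j <;>
      simp_all [fork, SimpleGraph.fromRel_adj]

lemma no_K4 {V : Type*} {G : SimpleGraph V} (hw : cliqueNumber G = 3)
    {a b c d : V} (hab : G.Adj a b) (hac : G.Adj a c) (had : G.Adj a d)
    (hbc : G.Adj b c) (hbd : G.Adj b d) (hcd : G.Adj c d) : False := by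
  classical
  have hcard : ({a,b,c,d} : Finset V).card = 4 := by
    rw [Finset.card_insert_of_notMem (by simp [hab.ne, hac.ne, had.ne]),
      Finset.card_insert_of_notMem (by simp [hbc.ne, hbd.ne]),
      Finset.card_insert_of_notMem (by simp [hcd.ne]), Finset.card_singleton]
  have hclique : G.IsClique ({a,b,c,d} : Finset V) := by
    intro x hx y hy hxy
    simp only [Finset.coe_insert, Set.mem_insert_iff, Finset.coe_singleton,
      Set.mem_singleton_iff] at hx hy
    rcases hx with rfl|rfl|rfl|rfl <;> rcases hy with rfl|rfl|rfl|rfl <;>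
      first
        | exact absurd rfl hxy
        | assumption
        | exact hab.symm | exact hac.symm | exact had.symm
        | exact hbc.symm | exact hbd.symm | exact hcd.symm
  have hmem : 4 ∈ {m | ∃ s : Finset V, G.IsNClique m s} :=
    ⟨{a,b,c,d}, ⟨hclique, hcard⟩⟩
  have hbdd : BddAbove {m | ∃ s : Finset V, G.IsNClique m s} := by
    by_contra hb
    have h0 : cliqueNumber G = 0 := by
      rw [cliqueNumber, csSup_of_not_bddAbove hb, csSup_empty]; rfl
    omega
  have h4 : 4 ≤ cliqueNumber G := le_csSup hbdd hmem
  omega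

/-- If moreover ω(G) = 3, then every vertex of N(u) ∖ {v₁, v₂, s} is complete to the set D
of neighbors of u (other than v₁, v₂) anticomplete to V(C). -/
theorem stmt_13 {V : Type*} (G : SimpleGraph V) (hfork : ForkFree G)
    (hw : cliqueNumber G = 3)
    (n : ℕ) (hn5 : 5 ≤ n) (hodd : Odd n)
    (v : ZMod n → V) (hC : IsInducedCycle G v)
    (u s : V) (hu : u ∉ Set.range v) (hs : s ∉ Set.range v)
    (hus : G.Adj u s)
    (hu1 : G.Adj u (v 1)) (hu2 : G.Adj u (v 2))
    (huC : ∀ i : ZMod n, i ≠ 1 → i ≠ 2 → ¬ G.Adj u (v i))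
    (hsC : ∀ i : ZMod n, ¬ G.Adj s (v i)) :
    ∀ t : V, G.Adj u t → t ≠ v 1 → t ≠ v 2 → t ≠ s →
      ∀ d : V, G.Adj u d → d ≠ v 1 → d ≠ v 2 → (∀ i : ZMod n, ¬ G.Adj d (v i)) →
        d ≠ t → G.Adj t d := by
  classical
  obtain ⟨hinj, hadj⟩ := hC
  intro t ht ht1 ht2 hts d hd hd1 hd2 hdC hdt
  by_contra htd
  -- vertices outside the hole
  have huR : ∀ i : ZMod n, u ≠ v i := fun i h => hu ⟨i, h.symm⟩
  have htR : ∀ i : ZMod n, t ≠ v i := by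
    intro i h
    by_cases h1 : i = 1
    · exact ht1 (by rw [h, h1])
    by_cases h2 : i = 2
    · exact ht2 (by rw [h, h2])
    exact huC i h1 h2 (h ▸ ht)
  have hdR : ∀ i : ZMod n, d ≠ v i := by
    intro i h
    by_cases h1 : i = 1
    · exact hd1 (by rw [h, h1])
    by_cases h2 : i = 2
    · exact hd2 (by rw [h, h2])
    exact huC i h1 h2 (h ▸ hd)
  -- basic helpers
  have vne : ∀ i j : ZMod n, i ≠ j → v i ≠ v j := fun i j hij h => hij (hinj h)
  have Av : ∀ i j : ZMod n, (j = i + 1 ∨ i = j + 1) → G.Adj (v i) (v j) :=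
    fun i j h => (hadj i j).mpr h
  have NAv : ∀ i j : ZMod n, j ≠ i + 1 → i ≠ j + 1 → ¬ G.Adj (v i) (v j) :=
    fun i j h1 h2 h => ((hadj i j).mp h).elim h1 h2
  -- ZMod facts
  have z01 : (0:ZMod n) ≠ 1 := by exact_mod_cast zmod_ne hn5 0 1 (by norm_num) (by norm_num) (by norm_num)
  have z02 : (0:ZMod n) ≠ 2 := by exact_mod_cast zmod_ne hn5 0 2 (by norm_num) (by norm_num) (by norm_num)
  have z03 : (0:ZMod n) ≠ 3 := by exact_mod_cast zmod_ne hn5 0 3 (by norm_num) (by norm_num) (by norm_num)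
  have z10 : (1:ZMod n) ≠ 0 := z01.symm
  have z31 : (3:ZMod n) ≠ 1 := by exact_mod_cast zmod_ne hn5 3 1 (by norm_num) (by norm_num) (by norm_num)
  have z32 : (3:ZMod n) ≠ 2 := by exact_mod_cast zmod_ne hn5 3 2 (by norm_num) (by norm_num) (by norm_num)
  have z41 : (4:ZMod n) ≠ 1 := by exact_mod_cast zmod_ne hn5 4 1 (by norm_num) (by norm_num) (by norm_num)
  have z42 : (4:ZMod n) ≠ 2 := by exact_mod_cast zmod_ne hn5 4 2 (by norm_num) (by norm_num) (by norm_num)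
  have z43 : (4:ZMod n) ≠ 3 := by exact_mod_cast zmod_ne hn5 4 3 (by norm_num) (by norm_num) (by norm_num)
  have z51 : (5:ZMod n) ≠ 1 := by exact_mod_cast zmod_ne hn5 5 1 (by norm_num) (by norm_num) (by norm_num)
  have z52 : (5:ZMod n) ≠ 2 := by exact_mod_cast zmod_ne hn5 5 2 (by norm_num) (by norm_num) (by norm_num)
  have z53 : (5:ZMod n) ≠ 3 := by exact_mod_cast zmod_ne hn5 5 3 (by norm_num) (by norm_num) (by norm_num)
  have z54 : (5:ZMod n) ≠ 4 := by exact_mod_cast zmod_ne hn5 5 4 (by norm_num) (by norm_num) (by norm_num)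
  have z23 : (2:ZMod n) ≠ 3 := z32.symm
  have z24 : (2:ZMod n) ≠ 4 := z42.symm
  have z25 : (2:ZMod n) ≠ 5 := z52.symm
  have z26 : (2:ZMod n) ≠ 6 := by exact_mod_cast zmod_ne hn5 2 6 (by norm_num) (by norm_num) (by norm_num)
  have z34 : (3:ZMod n) ≠ 4 := z43.symm
  have z35 : (3:ZMod n) ≠ 5 := z53.symm
  have z36 : (3:ZMod n) ≠ 6 := by exact_mod_cast zmod_ne hn5 3 6 (by norm_num) (by norm_num) (by norm_num)
  have z45 : (4:ZMod n) ≠ 5 := z54.symm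
  have zm10 : (-1:ZMod n) ≠ 0 := by exact_mod_cast zmod_ne hn5 (-1) 0 (by norm_num) (by norm_num) (by norm_num)
  have zm11 : (-1:ZMod n) ≠ 1 := by exact_mod_cast zmod_ne hn5 (-1) 1 (by norm_num) (by norm_num) (by norm_num)
  have zm12 : (-1:ZMod n) ≠ 2 := by exact_mod_cast zmod_ne hn5 (-1) 2 (by norm_num) (by norm_num) (by norm_num)
  have zm20 : (-2:ZMod n) ≠ 0 := by exact_mod_cast zmod_ne hn5 (-2) 0 (by norm_num) (by norm_num) (by norm_num)
  have zm21 : (-2:ZMod n) ≠ 1 := by exact_mod_cast zmod_ne hn5 (-2) 1 (by norm_num) (by norm_num) (by norm_num)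
  have zm22 : (-2:ZMod n) ≠ 2 := by exact_mod_cast zmod_ne hn5 (-2) 2 (by norm_num) (by norm_num) (by norm_num)
  have z1m1 : (1:ZMod n) ≠ -1 := zm11.symm
  have z1m2 : (1:ZMod n) ≠ -2 := zm21.symm
  have z0m1 : (0:ZMod n) ≠ -1 := zm10.symm
  have z0m2 : (0:ZMod n) ≠ -2 := zm20.symm
  have zm1m2 : (-1:ZMod n) ≠ -2 := by exact_mod_cast zmod_ne hn5 (-1) (-2) (by norm_num) (by norm_num) (by norm_num)
  -- key lemma L1 : if t is nonadjacent to v 1 then t is nonadjacent to v k for k ∉ {0,1,2}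
  have L1 : ¬ G.Adj t (v 1) → ∀ k : ZMod n, k ≠ 0 → k ≠ 1 → k ≠ 2 → ¬ G.Adj t (v k) := by
    intro h1 k hk0 hk1 hk2 hk
    exact fork_free_contra hfork (v 1) d u t (v k)
      (fun h => hdR 1 h.symm) (fun h => huR 1 h.symm) (fun h => htR 1 h.symm)
      (fun h => hk1 (hinj h).symm)
      hd.ne' hdt (hdR k) ht.ne (huR k) (htR k)
      hu1 hd ht hk
      (fun h => hdC 1 h.symm) (fun h => h1 h.symm)
      (NAv 1 k (fun hh => hk2 (by rw [hh]; norm_num)) (fun hh => hk0 (by linear_combination -hh)))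
      (fun h => htd h.symm) (hdC k) (huC k hk1 hk2)
  -- key lemma L2 : if t is nonadjacent to v 2 then t is nonadjacent to v k for k ∉ {1,2,3}
  have L2 : ¬ G.Adj t (v 2) → ∀ k : ZMod n, k ≠ 1 → k ≠ 2 → k ≠ 3 → ¬ G.Adj t (v k) := by
    intro h2 k hk1 hk2 hk3 hk
    exact fork_free_contra hfork (v 2) d u t (v k)
      (fun h => hdR 2 h.symm) (fun h => huR 2 h.symm) (fun h => htR 2 h.symm)
      (fun h => hk2 (hinj h).symm)
      hd.ne' hdt (hdR k) ht.ne (huR k) (htR k)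
      hu2 hd ht hk
      (fun h => hdC 2 h.symm) (fun h => h2 h.symm)
      (NAv 2 k (fun hh => hk3 (by rw [hh]; norm_num)) (fun hh => hk1 (by linear_combination -hh)))
      (fun h => htd h.symm) (hdC k) (huC k hk1 hk2)
  -- con1 : t is adjacent to v 1 or v 0
  have con1 : G.Adj t (v 1) ∨ G.Adj t (v 0) := by
    by_contra hcon
    push_neg at hcon
    exact fork_free_contra hfork t d u (v 1) (v 0)
      hdt.symm ht.ne' (htR 1) (htR 0)
      hd.ne' (hdR 1) (hdR 0) (huR 1) (huR 0) (vne 1 0 z10)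
      ht hd hu1 (Av 1 0 (Or.inr (by norm_num)))
      htd hcon.1 hcon.2 (hdC 1) (hdC 0) (huC 0 z01 z02)
  -- con2 : t is adjacent to v 2 or v 3
  have con2 : G.Adj t (v 2) ∨ G.Adj t (v 3) := by
    by_contra hcon
    push_neg at hcon
    exact fork_free_contra hfork t d u (v 2) (v 3)
      hdt.symm ht.ne' (htR 2) (htR 3)
      hd.ne' (hdR 2) (hdR 3) (huR 2) (huR 3) (vne 2 3 z23)
      ht hd hu2 (Av 2 3 (Or.inl (by norm_num)))
      htd hcon.1 hcon.2 (hdC 2) (hdC 3) (huC 3 z31 z32)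
  by_cases ht1a : G.Adj t (v 1)
  · -- case B : t ~ v1, hence t ≁ v2 (else K4), hence t ~ v3, and t ≁ v k otherwise
    have htv2 : ¬ G.Adj t (v 2) := fun h =>
      no_K4 hw ht hu1 hu2 ht1a h (Av 1 2 (Or.inl (by norm_num)))
    have hv3 : G.Adj t (v 3) := con2.resolve_left htv2
    exact fork_free_contra hfork (v 2) t (v 3) (v 4) (v 5)
      (fun h => htR 2 h.symm) (vne 2 3 z23) (vne 2 4 z24) (vne 2 5 z25)
      (htR 3) (htR 4) (htR 5)
      (vne 3 4 z34) (vne 3 5 z35) (vne 4 5 z45)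
      (Av 3 2 (Or.inr (by norm_num))) hv3.symm (Av 3 4 (Or.inl (by norm_num)))
      (Av 4 5 (Or.inl (by norm_num)))
      (fun h => htv2 h.symm)
      (NAv 2 4 (by norm_num [z43]) (by norm_num [z25]))
      (NAv 2 5 (by norm_num [z53]) (by norm_num [z26]))
      (L2 htv2 4 z41 z42 z43) (L2 htv2 5 z51 z52 z53)
      (NAv 3 5 (by norm_num [z54]) (by norm_num [z36]))
  by_cases ht2a : G.Adj t (v 2)
  · -- case C : t ~ v2, t ≁ v1, hence t ~ v0, and t ≁ v k otherwise
    have hv0 : G.Adj t (v 0) := con1.resolve_left ht1a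
    exact fork_free_contra hfork (v 1) t (v 0) (v (-1)) (v (-2))
      (fun h => htR 1 h.symm) (vne 1 0 z10) (vne 1 (-1) z1m1) (vne 1 (-2) z1m2)
      (htR 0) (htR (-1)) (htR (-2))
      (vne 0 (-1) z0m1) (vne 0 (-2) z0m2) (vne (-1) (-2) zm1m2)
      (Av 0 1 (Or.inl (by norm_num))) hv0.symm (Av 0 (-1) (Or.inr (by norm_num)))
      (Av (-1) (-2) (Or.inr (by norm_num)))
      (fun h => ht1a h.symm)
      (NAv 1 (-1) (by norm_num [zm12]) (by norm_num [z10]))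
      (NAv 1 (-2) (by norm_num [zm22]) (by norm_num [z1m1]))
      (L1 ht1a (-1) zm10 zm11 zm12) (L1 ht1a (-2) zm20 zm21 zm22)
      (NAv 0 (-2) (by norm_num [zm21]) (by norm_num [z0m1]))
  · -- case A : t ≁ v1, t ≁ v2, hence t ≁ v0, contradicting con1
    have hv0 : G.Adj t (v 0) := con1.resolve_left ht1a
    exact L2 ht2a 0 z01 z02 z03 hv0
end
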